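/- arXiv:2506.06911 — 5 statements merged into one kernel-verified Lean document; each statement's English description precedes it below -/
import Mathlib

section
/- Let (c_n)_{n≥1} be a sequence of positive real numbers with lim_{n→∞} c_n = 0. Then there exists a sequence (C_n)_{n≥1} of positive real numbers with lim_{n→∞} C_n = 0 satisfying the three additional conditions: (i) c_n ≤ C_n for all n ≥ 1; (ii) (C_n) is decreasing; (iii) C_n ≤ √((n+1)/n)·C_{n+1} for all n ≥ 1. -/
/-!
Replace `c` by its tail supremum `b n = sup_{k ≥ n} c k`, which is decreasing and still tends
to `0`, and put `C n = max_{k ≤ n} (√k · b k) / √n`. Since `√n · C n` is a running maximum it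
is nondecreasing, which is condition (iii); `C` is decreasing because the new term
`√(n+1) · b (n+1)` contributes only `b (n+1) ≤ b n ≤ C n`; and `C n → 0` because the first
`K` terms of the maximum are killed by the factor `1/√n`, while the remaining ones are
bounded by `b K`.
-/

open Filter

noncomputable section

def tailSup (c : ℕ → ℝ) (n : ℕ) : ℝ := ⨆ k, c (n + k)

section tailSup

variable {c : ℕ → ℝ}

lemma le_tailSup (hc : BddAbove (Set.range c)) {n m : ℕ} (h : n ≤ m) : c m ≤ tailSup c n := by
  obtain ⟨k, rfl⟩ := Nat.exists_eq_add_of_le h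
  exact le_ciSup (hc.mono (Set.range_comp_subset_range _ c)) k

lemma antitone_tailSup (hc : BddAbove (Set.range c)) : Antitone (tailSup c) := fun _ _ h =>
  ciSup_le fun k => le_tailSup hc (h.trans (Nat.le_add_right _ k))

lemma tendsto_tailSup_zero (hc : Tendsto c atTop (nhds 0)) :
    Tendsto (tailSup c) atTop (nhds 0) := by
  refine tendsto_order.2 ⟨fun a ha => ?_, fun a ha => ?_⟩
  · filter_upwards [hc.eventually (lt_mem_nhds ha)] with n hn
    exact hn.trans_le (le_tailSup hc.bddAbove_range le_rfl)
  · obtain ⟨N, hN⟩ := eventually_atTop.1 (hc.eventually (gt_mem_nhds (half_pos ha)))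
    filter_upwards [eventually_ge_atTop N] with n hn
    exact (ciSup_le fun k => (hN _ (hn.trans (Nat.le_add_right n k))).le).trans_lt
      (half_lt_self ha)

end tailSup

section partialSups

variable {w b : ℕ → ℝ}

lemma le_partialSups_mul_div {n : ℕ} (hw : 0 < w n) :
    b n ≤ partialSups (fun k => w k * b k) n / w n := by
  rw [le_div_iff₀ hw, mul_comm]
  exact le_partialSups_of_le (fun k => w k * b k) le_rfl

lemma partialSups_mul_le_max (hw : Monotone w) (hw0 : ∀ n, 0 ≤ w n) (hb : Antitone b)
    (hb0 : ∀ n, 0 ≤ b n) (K n : ℕ) :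
    partialSups (fun k => w k * b k) n ≤
      max (partialSups (fun k => w k * b k) K) (w n * b K) := by
  refine partialSups_le _ _ _ fun k hk => ?_
  rcases le_total k K with hkK | hKk
  · exact le_max_of_le_left (le_partialSups_of_le (fun k => w k * b k) hkK)
  · exact le_max_of_le_right (mul_le_mul (hw hk) (hb hKk) (hb0 k) (hw0 n))

lemma tendsto_partialSups_mul_div (hw : Monotone w) (hw0 : ∀ n, 0 ≤ w n)
    (hw_top : Tendsto w atTop atTop) (hb : Antitone b) (hb_lim : Tendsto b atTop (nhds 0)) :
    Tendsto (fun n => partialSups (fun k => w k * b k) n / w n) atTop (nhds 0) := by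
  have hb0 : ∀ n, 0 ≤ b n := hb.le_of_tendsto hb_lim
  have hw_pos : ∀ᶠ n in atTop, 0 < w n := hw_top.eventually_gt_atTop 0
  refine tendsto_order.2 ⟨fun a ha => ?_, fun a ha => ?_⟩
  · filter_upwards [hw_pos, hb_lim.eventually (lt_mem_nhds ha)] with n hn hbn
    exact hbn.trans_le (le_partialSups_mul_div hn)
  · obtain ⟨K, hK⟩ := (hb_lim.eventually (gt_mem_nhds ha)).exists_forall_of_atTop
    filter_upwards [hw_pos, eventually_ge_atTop K,
      (tendsto_const_nhds.div_atTop hw_top).eventually (gt_mem_nhds ha)] with n hn hKn hPK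
    rw [div_lt_iff₀ hn]
    refine (partialSups_mul_le_max hw hw0 hb hb0 K n).trans_lt (max_lt ?_ ?_)
    · rwa [div_lt_iff₀ hn] at hPK
    · rw [mul_comm]; exact mul_lt_mul_of_pos_right (hK K le_rfl) hn

lemma partialSups_mul_div_succ_le (hw : Monotone w) (hb : Antitone b) (hb0 : ∀ n, 0 ≤ b n)
    {n : ℕ} (hw_pos : 0 < w n) :
    partialSups (fun k => w k * b k) (n + 1) / w (n + 1)
      ≤ partialSups (fun k => w k * b k) n / w n := by
  have hw_succ : 0 < w (n + 1) := hw_pos.trans_le (hw n.le_succ)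
  have hP0 : 0 ≤ partialSups (fun k => w k * b k) n :=
    (mul_nonneg hw_pos.le (hb0 n)).trans (le_partialSups_of_le (fun k => w k * b k) le_rfl)
  rw [partialSups_add_one, div_le_div_iff₀ hw_succ hw_pos, max_mul_of_nonneg _ _ hw_pos.le]
  refine max_le (mul_le_mul_of_nonneg_left (hw n.le_succ) hP0) ?_
  calc w (n + 1) * b (n + 1) * w n = w n * b (n + 1) * w (n + 1) := by ring
    _ ≤ w n * b n * w (n + 1) :=
        mul_le_mul_of_nonneg_right (mul_le_mul_of_nonneg_left (hb n.le_succ) hw_pos.le)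
          hw_succ.le
    _ ≤ partialSups (fun k => w k * b k) n * w (n + 1) :=
        mul_le_mul_of_nonneg_right (le_partialSups_of_le (fun k => w k * b k) le_rfl) hw_succ.le

end partialSups

lemma sqrt_succ_div_mul_div_sqrt_succ {n : ℕ} (hn : 1 ≤ n) (x : ℝ) :
    √(((n : ℝ) + 1) / n) * (x / √((n + 1 : ℕ) : ℝ)) = x / √(n : ℝ) := by
  have hn' : (0 : ℝ) < n := by exact_mod_cast hn
  rw [Real.sqrt_div (by positivity)]
  push_cast
  field_simp

lemma monotone_sqrt_natCast : Monotone fun n : ℕ => √(n : ℝ) :=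
  fun _ _ h => Real.sqrt_le_sqrt (Nat.cast_le.2 h)

/-- Any positive sequence `(c n)` tending to `0` is dominated by a positive
sequence `(C n)` tending to `0` which is decreasing and satisfies
`C n ≤ √((n+1)/n) · C (n+1)` for all `n ≥ 1`. -/
theorem statement12 (c : ℕ → ℝ) (hpos : ∀ n : ℕ, 1 ≤ n → 0 < c n)
    (hlim : Filter.Tendsto c Filter.atTop (nhds 0)) :
    ∃ C : ℕ → ℝ, Filter.Tendsto C Filter.atTop (nhds 0) ∧
      (∀ n : ℕ, 1 ≤ n → 0 < C n) ∧
      (∀ n : ℕ, 1 ≤ n → c n ≤ C n) ∧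
      (∀ n : ℕ, 1 ≤ n → C (n + 1) ≤ C n) ∧
      (∀ n : ℕ, 1 ≤ n → C n ≤ Real.sqrt (((n : ℝ) + 1) / n) * C (n + 1)) := by
  set b := tailSup c
  set P := partialSups fun k : ℕ => √(k : ℝ) * b k
  have hb : Antitone b := antitone_tailSup hlim.bddAbove_range
  have hb_lim : Tendsto b atTop (nhds 0) := tendsto_tailSup_zero hlim
  have hcb : ∀ n, c n ≤ b n := fun n => le_tailSup hlim.bddAbove_range le_rfl
  have hsqrt_pos : ∀ n : ℕ, 1 ≤ n → 0 < √(n : ℝ) := fun n hn =>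
    Real.sqrt_pos.2 (by exact_mod_cast hn)
  have hcC : ∀ n, 1 ≤ n → c n ≤ P n / √(n : ℝ) := fun n hn =>
    (hcb n).trans (le_partialSups_mul_div (hsqrt_pos n hn))
  refine ⟨fun n => P n / √(n : ℝ), ?_, fun n hn => (hpos n hn).trans_le (hcC n hn), hcC,
    fun n hn => ?_, fun n hn => ?_⟩
  · exact tendsto_partialSups_mul_div monotone_sqrt_natCast (fun n => Real.sqrt_nonneg _)
      (Real.tendsto_sqrt_atTop.comp tendsto_natCast_atTop_atTop) hb hb_lim
  · exact partialSups_mul_div_succ_le monotone_sqrt_natCast hb (hb.le_of_tendsto hb_lim)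
      (hsqrt_pos n hn)
  · rw [sqrt_succ_div_mul_div_sqrt_succ hn]
    exact div_le_div_of_nonneg_right (P.monotone n.le_succ) (Real.sqrt_nonneg _)
end
end

section
/- Let (c_n)_{n≥1} be a sequence of positive reals, decreasing, with lim_{n→∞} c_n = 0, c_1 < 1, and c_n ≤ √((n+1)/n)·c_{n+1} for all n ≥ 1. Define h on (0, ∞) by h(x) = c_n² for x ∈ (c_{n+1}/√(n+1), c_n/√n] (n ≥ 1) and h(x) = c_1² for x > c_1. Then for all sufficiently large positive integers n: inf_{x ∈ (0,1)} (n·x + h(x)/x) ≥ c_n·√n. -/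
open Filter Set

noncomputable section

/-- Let `(c n)` be a positive decreasing sequence tending to `0` with
`c 1 < 1` and `c n ≤ √((n+1)/n)·c (n+1)` for all `n ≥ 1`, and let `h` be the step function
with `h x = (c n)²` on `(c (n+1)/√(n+1), c n/√n]` and `h x = (c 1)²` for `x > c 1`. Then for
all sufficiently large `n`, `inf_{x ∈ (0,1)} (n·x + h x / x) ≥ c n · √n`. -/
theorem statement14 (c : ℕ → ℝ)
    (hpos : ∀ n : ℕ, 1 ≤ n → 0 < c n)
    (hdec : ∀ n : ℕ, 1 ≤ n → c (n + 1) ≤ c n)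
    (hlim : Filter.Tendsto c Filter.atTop (nhds 0))
    (hc1 : c 1 < 1)
    (hreg : ∀ n : ℕ, 1 ≤ n → c n ≤ Real.sqrt (((n : ℝ) + 1) / n) * c (n + 1))
    (h : ℝ → ℝ)
    (hstep : ∀ n : ℕ, 1 ≤ n → ∀ x : ℝ,
      c (n + 1) / Real.sqrt ((n : ℝ) + 1) < x → x ≤ c n / Real.sqrt n → h x = (c n) ^ 2)
    (htail : ∀ x : ℝ, c 1 < x → h x = (c 1) ^ 2) :
    ∃ N : ℕ, ∀ n : ℕ, N ≤ n →
      ∀ x ∈ Set.Ioo (0 : ℝ) 1, c n * Real.sqrt n ≤ (n : ℝ) * x + h x / x := by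
  -- √n > 0 for n ≥ 1
  have hsq : ∀ n : ℕ, 1 ≤ n → (0:ℝ) < Real.sqrt n := by
    intro n hn
    exact Real.sqrt_pos.mpr (by exact_mod_cast Nat.lt_of_lt_of_le Nat.zero_lt_one hn)
  -- c n * √n is increasing (one step)
  have step1 : ∀ k : ℕ, 1 ≤ k →
      c k * Real.sqrt k ≤ c (k+1) * Real.sqrt ((k+1 : ℕ)) := by
    intro k hk
    have hk0 : (0:ℝ) < (k:ℝ) := by exact_mod_cast hk
    have h1 := hreg k hk
    have h2 : c k * Real.sqrt k ≤ Real.sqrt (((k:ℝ)+1)/k) * c (k+1) * Real.sqrt k :=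
      mul_le_mul_of_nonneg_right h1 (Real.sqrt_nonneg _)
    have h3 : Real.sqrt (((k:ℝ)+1)/k) * Real.sqrt k = Real.sqrt ((k:ℝ)+1) := by
      rw [← Real.sqrt_mul (by positivity), div_mul_cancel₀ _ hk0.ne']
    calc c k * Real.sqrt k ≤ Real.sqrt (((k:ℝ)+1)/k) * c (k+1) * Real.sqrt k := h2
      _ = (Real.sqrt (((k:ℝ)+1)/k) * Real.sqrt k) * c (k+1) := by ring
      _ = Real.sqrt ((k:ℝ)+1) * c (k+1) := by rw [h3]
      _ = c (k+1) * Real.sqrt ((k:ℝ)+1) := by ring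
      _ = c (k+1) * Real.sqrt ((k+1 : ℕ)) := by norm_cast
  -- extended increasing
  have incr : ∀ a b : ℕ, 1 ≤ a → a ≤ b → c a * Real.sqrt a ≤ c b * Real.sqrt b := by
    intro a b ha hab
    induction b, hab using Nat.le_induction with
    | base => exact le_rfl
    | succ b hab ih => exact le_trans ih (step1 b (le_trans ha hab))
  -- c n / √n is decreasing (one step)
  have dec1 : ∀ k : ℕ, 1 ≤ k →
      c (k+1) / Real.sqrt ((k+1 : ℕ)) ≤ c k / Real.sqrt k := by
    intro k hk
    apply div_le_div₀ (le_of_lt (hpos k hk)) (hdec k hk) (hsq k hk)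
    exact Real.sqrt_le_sqrt (by exact_mod_cast Nat.le_succ k)
  have dec : ∀ a b : ℕ, 1 ≤ a → a ≤ b → c b / Real.sqrt b ≤ c a / Real.sqrt a := by
    intro a b ha hab
    induction b, hab using Nat.le_induction with
    | base => exact le_rfl
    | succ b hab ih => exact le_trans (dec1 b (le_trans ha hab)) ih
  refine ⟨1, fun n hn x hx => ?_⟩
  obtain ⟨hx0, hx1⟩ := hx
  have hsqn := hsq n hn
  have hcn := hpos n hn
  -- key fact : c n * √n = n * (c n / √n)
  have hkey : c n * Real.sqrt n = (n:ℝ) * (c n / Real.sqrt n) := by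
    rw [mul_div_assoc', mul_comm (n:ℝ) (c n), mul_div_assoc]
    congr 1
    rw [eq_div_iff hsqn.ne', Real.mul_self_sqrt (by positivity)]
  -- helper : if c n / √n < x then c n * √n ≤ n * x, and we finish if also 0 ≤ h x
  have finish : c n / Real.sqrt n < x → 0 ≤ h x / x → c n * Real.sqrt n ≤ (n:ℝ) * x + h x / x := by
    intro hlt hnn
    have : (n:ℝ) * (c n / Real.sqrt n) ≤ (n:ℝ) * x := by
      apply mul_le_mul_of_nonneg_left hlt.le (by positivity)
    linarith [hkey ▸ this]
  by_cases hcase : c 1 < x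
  · -- tail case
    have hx' : h x = (c 1)^2 := htail x hcase
    apply finish
    · calc c n / Real.sqrt n ≤ c 1 / Real.sqrt ((1:ℕ)) := dec 1 n le_rfl hn
        _ = c 1 := by norm_num
        _ < x := hcase
    · rw [hx']; positivity
  · push_neg at hcase
    -- find the interval containing x
    have hev : ∀ᶠ k in atTop, c k < x := hlim.eventually_lt_const hx0
    obtain ⟨K, hK⟩ := eventually_atTop.mp hev
    have hex : ∃ k, 1 ≤ k ∧ c (k+1) / Real.sqrt ((k:ℝ)+1) < x := by
      refine ⟨max K 1, le_max_right _ _, ?_⟩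
      have h1 : c (max K 1 + 1) < x := hK _ (le_trans (le_max_left _ _) (Nat.le_succ _))
      have h2 : (1:ℝ) ≤ Real.sqrt (((max K 1 : ℕ):ℝ)+1) := by
        have h0 : (0:ℝ) ≤ ((max K 1 : ℕ):ℝ) := by positivity
        have := Real.sqrt_le_sqrt (show (1:ℝ) ≤ ((max K 1 : ℕ):ℝ)+1 by linarith)
        simpa using this
      have h3 : c (max K 1 + 1) / Real.sqrt (((max K 1 : ℕ):ℝ)+1) ≤ c (max K 1 + 1) :=
        div_le_self (hpos _ (by omega)).le h2
      exact lt_of_le_of_lt h3 h1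
    classical
    set m := Nat.find hex with hm
    obtain ⟨hm1, hmlt⟩ := Nat.find_spec hex
    have hmub : x ≤ c m / Real.sqrt m := by
      rcases Nat.lt_or_ge 1 m with h1m | h1m
      · have hmin := Nat.find_min hex (show m - 1 < m by omega)
        push_neg at hmin
        have h2 := hmin (by omega)
        have : m - 1 + 1 = m := by omega
        rw [this] at h2
        have : ((m - 1 : ℕ) : ℝ) + 1 = (m : ℝ) := by
          push_cast [Nat.cast_sub (by omega : 1 ≤ m)]; ring
        rwa [this] at h2
      · have : m = 1 := le_antisymm h1m hm1
        rw [this]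
        simpa using hcase
    have hxstep : h x = (c m)^2 := hstep m hm1 x hmlt hmub
    rcases le_or_gt n m with hnm | hmn
    · -- n ≤ m : use h x / x ≥ c m √m ≥ c n √n
      have hcm := hpos m hm1
      have hsqm := hsq m hm1
      have h1 : x * Real.sqrt m ≤ c m := by
        rw [← le_div_iff₀ hsqm]; exact hmub
      have h2 : c m * Real.sqrt m ≤ (c m)^2 / x := by
        rw [le_div_iff₀ hx0]
        nlinarith [hcm.le, hsqm.le]
      have h3 : c n * Real.sqrt n ≤ c m * Real.sqrt m := incr n m hn hnm
      have h4 : 0 ≤ (n:ℝ) * x := by positivity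
      rw [hxstep]
      linarith
    · -- m < n : use n x ≥ c n √n
      apply finish
      · calc c n / Real.sqrt n ≤ c (m+1) / Real.sqrt ((m+1:ℕ)) := dec (m+1) n (by omega) hmn
          _ = c (m+1) / Real.sqrt ((m:ℝ)+1) := by norm_cast
          _ < x := hmlt
      · rw [hxstep]; positivity
end
end

section
/- Let (c_n)_{n≥1} be any sequence of positive real numbers with lim_{n→∞} c_n = 0. Then there exists a continuous function h : [0,1] → [0,∞) with h(0) = 0, h increasing, and x ↦ h(x)/x decreasing on (0,1], such that for all sufficiently large positive integers n: inf_{x ∈ (0,1)} (n·x + h(x)/x) ≥ c_n·√n. -/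
/-!
Take `h x = ⨆ m, min (c m * √m * x) (c m ^ 2)`. Each term is increasing in `x` with `term / x`
decreasing, and the supremum inherits both properties. Together they pinch `h` near `x > 0` between
the constant `h x` and the line through `0` and `(x, h x)`, which gives continuity away from `0`;
continuity at `0` comes from `c m → 0`.
For `x < c n / √n` the `n`-th term alone gives `h x / x ≥ c n * √n`; otherwise `n * x ≥ c n * √n`.
-/

open Filter Set Topology

noncomputable section

theorem continuousAt_of_monotoneOn_of_antitoneOn_div {h : ℝ → ℝ} {x : ℝ} (hx : 0 < x)
    (hmono : MonotoneOn h (Ioi 0)) (hanti : AntitoneOn (fun y => h y / y) (Ioi 0)) :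
    ContinuousAt h x := by
  have hline : Tendsto (fun y => h x / x * y) (𝓝 x) (𝓝 (h x)) := by
    simpa [div_mul_cancel₀ _ hx.ne'] using (continuous_const_mul (h x / x)).tendsto x
  have hlow : Tendsto (fun y => min (h x) (h x / x * y)) (𝓝 x) (𝓝 (h x)) := by
    simpa using (tendsto_const_nhds (x := h x)).min hline
  have hupp : Tendsto (fun y => max (h x) (h x / x * y)) (𝓝 x) (𝓝 (h x)) := by
    simpa using (tendsto_const_nhds (x := h x)).max hline
  refine tendsto_of_tendsto_of_tendsto_of_le_of_le' hlow hupp ?_ ?_ <;>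
  filter_upwards [Ioi_mem_nhds hx] with y hy <;>
  rcases le_total y x with hyx | hxy
  · have hratio := hanti hy hx hyx
    rw [le_div_iff₀ hy] at hratio
    exact min_le_of_right_le hratio
  · exact min_le_of_left_le (hmono hx hy hxy)
  · exact le_max_of_le_left (hmono hy hx hyx)
  · have hratio := hanti hx hy hxy
    rw [div_le_iff₀ hy] at hratio
    exact le_max_of_le_right hratio

theorem Monotone.continuousWithinAt_Ici_of_forall_exists_lt {h : ℝ → ℝ} (hmono : Monotone h)
    {x : ℝ} (hsmall : ∀ ε > 0, ∃ δ > x, h δ < h x + ε) : ContinuousWithinAt h (Ici x) x := by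
  refine tendsto_order.2 ⟨fun l hl => ?_, fun u hu => ?_⟩
  · filter_upwards [self_mem_nhdsWithin] with y hy
    exact hl.trans_le (hmono hy)
  · obtain ⟨δ, hδx, hδ⟩ := hsmall (u - h x) (sub_pos.2 hu)
    filter_upwards [nhdsWithin_le_nhds (Iio_mem_nhds hδx)] with y hy
    linarith [hmono (le_of_lt hy)]

theorem mul_le_sq_mul_add_div_of_min_le {c s x H : ℝ} (hc : 0 ≤ c) (hs : 0 ≤ s) (hx : 0 < x)
    (hH : min (c * s * x) (c ^ 2) ≤ H) : c * s ≤ s ^ 2 * x + H / x := by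
  rcases le_total c (s * x) with hcsx | hsxc
  · have hH0 : 0 ≤ H := (le_min (by positivity) (by positivity)).trans hH
    have : 0 ≤ H / x := div_nonneg hH0 hx.le
    nlinarith [mul_le_mul_of_nonneg_right hcsx hs]
  · rw [min_eq_left (by nlinarith)] at hH
    have : c * s ≤ H / x := by rwa [le_div_iff₀ hx]
    nlinarith [sq_nonneg s]

def supMinLinear {ι : Type*} (a b : ι → ℝ) (x : ℝ) : ℝ :=
  ⨆ i, min (a i * x) (b i)

namespace supMinLinear

section

variable {ι : Type*} {a b : ι → ℝ}

theorem bddAbove (hb : BddAbove (range b)) (x : ℝ) :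
    BddAbove (range fun i => min (a i * x) (b i)) := by
  obtain ⟨B, hB⟩ := hb
  exact ⟨B, forall_mem_range.2 fun i => (min_le_right _ _).trans (hB (mem_range_self i))⟩

theorem min_le (hb : BddAbove (range b)) (i : ι) (x : ℝ) :
    min (a i * x) (b i) ≤ supMinLinear a b x :=
  le_ciSup (bddAbove hb x) i

theorem nonneg (ha : ∀ i, 0 ≤ a i) (hb : ∀ i, 0 ≤ b i) {x : ℝ} (hx : 0 ≤ x) :
    0 ≤ supMinLinear a b x :=
  Real.iSup_nonneg fun i => le_min (mul_nonneg (ha i) hx) (hb i)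

theorem zero [Nonempty ι] (hb : ∀ i, 0 ≤ b i) : supMinLinear a b 0 = 0 := by
  simp [supMinLinear, min_eq_left (hb _)]

theorem monotone (ha : ∀ i, 0 ≤ a i) (hb : BddAbove (range b)) : Monotone (supMinLinear a b) :=
  fun _ _ hxy => ciSup_mono (bddAbove hb _) fun i =>
    min_le_min_right _ (mul_le_mul_of_nonneg_left hxy (ha i))

theorem antitoneOn_div [Nonempty ι] (hb0 : ∀ i, 0 ≤ b i) (hb : BddAbove (range b)) :
    AntitoneOn (fun x => supMinLinear a b x / x) (Ioi 0) := by
  intro x (hx : 0 < x) y hy hxy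
  have hyx : 1 ≤ y / x := (one_le_div hx).2 hxy
  have hscale : supMinLinear a b y ≤ y / x * supMinLinear a b x := by
    refine ciSup_le fun i => ?_
    calc min (a i * y) (b i) ≤ min (y / x * (a i * x)) (y / x * b i) := by
          rw [show y / x * (a i * x) = a i * y by field_simp]
          exact min_le_min_left _ (le_mul_of_one_le_left (hb0 i) hyx)
      _ = y / x * min (a i * x) (b i) := (mul_min_of_nonneg _ _ (by positivity)).symm
      _ ≤ y / x * supMinLinear a b x := by gcongr; exact min_le hb i x
  show supMinLinear a b y / y ≤ supMinLinear a b x / x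
  rw [div_le_div_iff₀ (hx.trans_le hxy) hx]
  calc supMinLinear a b y * x ≤ y / x * supMinLinear a b x * x := by gcongr
    _ = supMinLinear a b x * y := by field_simp

theorem continuousAt [Nonempty ι] (ha : ∀ i, 0 ≤ a i) (hb0 : ∀ i, 0 ≤ b i)
    (hb : BddAbove (range b)) {x : ℝ} (hx : 0 < x) : ContinuousAt (supMinLinear a b) x :=
  continuousAt_of_monotoneOn_of_antitoneOn_div hx ((monotone ha hb).monotoneOn _)
    (antitoneOn_div hb0 hb)

end

section

variable {a b : ℕ → ℝ}

theorem exists_pos_lt (ha : ∀ i, 0 ≤ a i) (hb : Tendsto b atTop (𝓝 0)) {ε : ℝ} (hε : 0 < ε) :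
    ∃ δ > 0, supMinLinear a b δ < ε := by
  obtain ⟨M, hM⟩ := eventually_atTop.1 (hb.eventually_le_const (half_pos hε))
  set A := ∑ i ∈ Finset.range M, a i
  have hA : 0 ≤ A := Finset.sum_nonneg fun i _ => ha i
  refine ⟨ε / 2 / (A + 1), by positivity, ?_⟩
  refine (ciSup_le fun i => ?_).trans_lt (half_lt_self hε)
  rcases le_or_gt M i with hiM | hiM
  · exact (min_le_right _ _).trans (hM i hiM)
  · have hai : a i ≤ A + 1 :=
      (Finset.single_le_sum (fun j _ => ha j) (Finset.mem_range.2 hiM)).trans (by linarith)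
    calc min (a i * (ε / 2 / (A + 1))) (b i) ≤ (A + 1) * (ε / 2 / (A + 1)) :=
          (min_le_left _ _).trans (by gcongr)
      _ = ε / 2 := mul_div_cancel₀ _ (by positivity)

theorem continuousOn_Icc (ha : ∀ i, 0 ≤ a i) (hb : Tendsto b atTop (𝓝 0)) (hb0 : ∀ i, 0 ≤ b i)
    (s : ℝ) : ContinuousOn (supMinLinear a b) (Icc 0 s) := by
  intro x hx
  rcases hx.1.eq_or_lt with rfl | hx0
  · refine ((monotone ha hb.bddAbove_range).continuousWithinAt_Ici_of_forall_exists_lt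
      fun ε hε => ?_).mono Icc_subset_Ici_self
    simpa [zero hb0] using exists_pos_lt ha hb hε
  · exact (continuousAt ha hb0 hb.bddAbove_range hx0).continuousWithinAt

end

end supMinLinear

/-- For any positive sequence `(c n)` tending to `0`, there is a continuous
function `h : [0,1] → [0,∞)` with `h 0 = 0`, `h` increasing and `x ↦ h x / x` decreasing on
`(0,1]`, such that for all sufficiently large `n`,
`inf_{x ∈ (0,1)} (n·x + h x / x) ≥ c n · √n`. -/
theorem statement16 (c : ℕ → ℝ) (hpos : ∀ n : ℕ, 1 ≤ n → 0 < c n)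
    (hlim : Filter.Tendsto c Filter.atTop (nhds 0)) :
    ∃ h : ℝ → ℝ, ContinuousOn h (Set.Icc 0 1) ∧ h 0 = 0 ∧
      (∀ x ∈ Set.Icc (0 : ℝ) 1, 0 ≤ h x) ∧
      MonotoneOn h (Set.Icc 0 1) ∧
      AntitoneOn (fun x => h x / x) (Set.Ioc 0 1) ∧
      ∃ N : ℕ, ∀ n : ℕ, N ≤ n →
        ∀ x ∈ Set.Ioo (0 : ℝ) 1, c n * Real.sqrt n ≤ (n : ℝ) * x + h x / x := by
  set a : ℕ → ℝ := fun m => c m * Real.sqrt m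
  set b : ℕ → ℝ := fun m => c m ^ 2
  have ha : ∀ m, 0 ≤ a m := by
    rintro (_ | m)
    · simp [a]
    · exact mul_nonneg (hpos _ m.succ_pos).le (Real.sqrt_nonneg _)
  have hb0 : ∀ m, 0 ≤ b m := fun m => sq_nonneg _
  have hb : Tendsto b atTop (𝓝 0) := by simpa using hlim.pow 2
  refine ⟨supMinLinear a b, supMinLinear.continuousOn_Icc ha hb hb0 1, supMinLinear.zero hb0,
    fun x hx => supMinLinear.nonneg ha hb0 hx.1,
    (supMinLinear.monotone ha hb.bddAbove_range).monotoneOn _,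
    (supMinLinear.antitoneOn_div hb0 hb.bddAbove_range).mono Ioc_subset_Ioi_self,
    1, fun n hn x hx => ?_⟩
  have key := mul_le_sq_mul_add_div_of_min_le (hpos n hn).le (Real.sqrt_nonneg n) hx.1
    (supMinLinear.min_le (a := a) hb.bddAbove_range n x)
  rwa [Real.sq_sqrt n.cast_nonneg] at key
end
end

section
/- Let h : [0,1] → [0,∞) be a continuous increasing function with h(0) = 0. Then there exists a closed set E ⊂ 𝕋 of positive Lebesgue (arclength) measure which contains no nonempty open arc of 𝕋, such that ∑_{ℓ ∈ 𝒞(E)} h(|ℓ|) < ∞, where 𝒞(E) is the family of maximal open arcs of 𝕋 ∖ E and |ℓ| is the arclength of ℓ. -/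
/-!
The set is `E = 𝕋 \ exp(i O)` with `O = ⋃ₖ (cₖ - εₖ, cₖ + εₖ)` for a dense sequence `c`:
density of `O` leaves no arc in `E`, and `∑ 2εₖ < 2π` leaves `E` of positive measure. A gap `ℓ`
is a connected component of `exp(i O)`, so it contains a first arc `exp(i(cₖ - εₖ, cₖ + εₖ))`;
its index `m ℓ` determines `ℓ`, and `ℓ` is covered by the arcs of index `≥ m ℓ`, whence
`|ℓ| ≤ ∑_{i ≥ m ℓ} 2εᵢ`. Taking `εₖ = ηₖ / 2^(k+2)` for a decreasing `ηₖ > 0` with `|h| ≤ 2⁻ᵏ`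
on `[0, ηₖ]` (continuity of `h` at `0`) makes this tail at most `η_{m ℓ}`, so the injectivity of
`m` gives `∑_ℓ |h(|ℓ|)| ≤ ∑ₖ 2⁻ᵏ`.
-/

open MeasureTheory Set

noncomputable section

/-- Arclength measure on the unit circle `𝕋 = {z : ‖z‖ = 1}`. -/
def arcMeasure : Measure ℂ :=
  Measure.map (circleMap 0 1) (volume.restrict (Set.Ioc 0 (2 * Real.pi)))

/-- The family `𝒞(E)` of maximal open arcs complementary to `E` in the unit circle, realized as
the connected components of `𝕋 \ E`. -/
def circleGaps (E : Set ℂ) : Set (Set ℂ) :=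
  {ℓ | ∃ z ∈ Metric.sphere (0 : ℂ) 1 \ E,
      ℓ = connectedComponentIn (Metric.sphere (0 : ℂ) 1 \ E) z}

open Metric Real
open scoped Pointwise

theorem circleMap_zero_one_eq_iff {a b : ℝ} :
    circleMap 0 1 a = circleMap 0 1 b ↔ a - b ∈ AddSubgroup.zmultiples (2 * π) := by
  have hexp : ∀ θ : ℝ, circleMap 0 1 θ = Circle.exp θ := fun θ => by
    simp [circleMap, Circle.coe_exp]
  rw [hexp, hexp, Circle.coe_inj, Circle.exp_eq_exp, AddSubgroup.mem_zmultiples_iff]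
  refine exists_congr fun n => ?_
  rw [zsmul_eq_mul]
  constructor <;> intro h <;> linarith

theorem circleMap_zero_one_preimage_image (S : Set ℝ) :
    circleMap 0 1 ⁻¹' (circleMap 0 1 '' S) =
      ⋃ g : AddSubgroup.zmultiples (2 * π), g +ᵥ S := by
  ext x
  simp only [mem_preimage, mem_image, mem_iUnion, mem_vadd_set, circleMap_zero_one_eq_iff,
    AddSubgroup.vadd_def, vadd_eq_add]
  constructor
  · rintro ⟨y, hy, hyx⟩
    exact ⟨⟨x - y, by simpa using neg_mem hyx⟩, y, hy, sub_add_cancel x y⟩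
  · rintro ⟨⟨g, hg⟩, y, hy, rfl⟩
    exact ⟨y, hy, by simpa using neg_mem hg⟩

theorem circleMap_zero_one_image_subset_sphere (S : Set ℝ) : circleMap 0 1 '' S ⊆ sphere 0 1 :=
  (image_subset_range _ _).trans (by simp [range_circleMap])

theorem image_circleMap_zero_one_Icc : circleMap 0 1 '' Icc 0 (2 * π) = sphere 0 1 := by
  refine subset_antisymm (circleMap_zero_one_image_subset_sphere _) ?_
  simpa using image_mono (f := circleMap 0 1) (Ioc_subset_Icc_self (a := 0) (b := 2 * π))

theorem isClosed_sphere_diff_circleMap_image {O : Set ℝ} (hO : IsOpen O) :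
    IsClosed (sphere (0 : ℂ) 1 \ circleMap 0 1 '' O) := by
  have hP : IsOpen (circleMap 0 1 ⁻¹' (circleMap 0 1 '' O)) := by
    rw [circleMap_zero_one_preimage_image]
    exact isOpen_iUnion fun g => hO.vadd g
  rw [← image_circleMap_zero_one_Icc, ← image_sdiff_preimage]
  exact ((isCompact_Icc.diff hP).image (continuous_circleMap 0 1)).isClosed

theorem measurableSet_circleMap_image {O : Set ℝ} (hO : IsOpen O) :
    MeasurableSet (circleMap 0 1 '' O) := by
  rw [← sdiff_sdiff_cancel_left (circleMap_zero_one_image_subset_sphere O)]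
  exact isClosed_sphere.measurableSet.diff (isClosed_sphere_diff_circleMap_image hO).measurableSet

theorem arcMeasure_image_le {O : Set ℝ} (hO : IsOpen O) :
    arcMeasure (circleMap 0 1 '' O) ≤ volume O := by
  -- the preimage of the arc is the union of the `2πℤ`-translates of `O`, whose pieces in the
  -- fundamental domain `(0, 2π]` have total measure `volume O`
  have hfd := isAddFundamentalDomain_Ioc Real.two_pi_pos 0
  rw [arcMeasure, Measure.map_apply (measurable_circleMap 0 1) (measurableSet_circleMap_image hO),
    Measure.restrict_apply' measurableSet_Ioc, circleMap_zero_one_preimage_image, iUnion_inter,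
    hfd.measure_eq_tsum O, zero_add]
  exact measure_iUnion_le _

theorem arcMeasure_sphere : arcMeasure (sphere 0 1) = ENNReal.ofReal (2 * π) := by
  have hpre : circleMap 0 1 ⁻¹' sphere 0 1 = univ :=
    eq_univ_of_forall fun θ => circleMap_mem_sphere 0 zero_le_one θ
  rw [arcMeasure, Measure.map_apply (measurable_circleMap 0 1) isClosed_sphere.measurableSet, hpre,
    Measure.restrict_apply_univ, Real.volume_Ioc, sub_zero]

theorem arcMeasure_sphere_diff_pos {O : Set ℝ} (hO : IsOpen O)
    (hvol : volume O < ENNReal.ofReal (2 * π)) :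
    0 < arcMeasure (sphere 0 1 \ circleMap 0 1 '' O) := by
  calc (0 : ENNReal) < arcMeasure (sphere 0 1) - arcMeasure (circleMap 0 1 '' O) := by
        rw [arcMeasure_sphere]
        exact tsub_pos_of_lt ((arcMeasure_image_le hO).trans_lt hvol)
    _ ≤ _ := le_measure_sdiff

theorem not_circleMap_image_Ioo_subset {O : Set ℝ} (hO : Dense O) {a b : ℝ} (hab : a < b) :
    ¬ circleMap 0 1 '' Ioo a b ⊆ sphere 0 1 \ circleMap 0 1 '' O := by
  obtain ⟨x, hx, hxO⟩ := hO.inter_open_nonempty _ isOpen_Ioo (nonempty_Ioo.2 hab)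
  exact fun hsub => (hsub (mem_image_of_mem _ hx)).2 (mem_image_of_mem _ hxO)

theorem volume_iUnion_Ioo_le (c ε : ℕ → ℝ) :
    volume (⋃ k, Ioo (c k - ε k) (c k + ε k)) ≤ ∑' k, ENNReal.ofReal (2 * ε k) := by
  refine (measure_iUnion_le _).trans (le_of_eq (tsum_congr fun k => ?_))
  rw [Real.volume_Ioo]
  ring_nf

def connectedComponentsIn {X : Type*} [TopologicalSpace X] (V : Set X) : Set (Set X) :=
  {ℓ | ∃ z ∈ V, ℓ = connectedComponentIn V z}

theorem exists_injective_index_connectedComponentsIn {X : Type*} [TopologicalSpace X]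
    {V : Set X} {A : ℕ → Set X} (hV : V = ⋃ k, A k) (hA : ∀ k, IsPreconnected (A k))
    (hne : ∀ k, (A k).Nonempty) :
    ∃ m : connectedComponentsIn V → ℕ, Function.Injective m ∧ ∀ ℓ, ℓ.1 ⊆ ⋃ i, A (m ℓ + i) := by
  classical
  have hcc : ∀ ℓ : connectedComponentsIn V, ∀ w ∈ ℓ.1, ℓ.1 = connectedComponentIn V w := by
    intro ℓ w hw
    obtain ⟨z, -, hℓz⟩ := ℓ.2
    rw [hℓz] at hw ⊢
    exact connectedComponentIn_eq hw
  have hsub : ∀ (ℓ : connectedComponentsIn V) k w, w ∈ A k → w ∈ ℓ.1 → A k ⊆ ℓ.1 := by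
    intro ℓ k w hwA hwℓ
    rw [hcc ℓ w hwℓ]
    exact (hA k).subset_connectedComponentIn hwA (hV ▸ subset_iUnion A k)
  have hmem : ∀ ℓ : connectedComponentsIn V, ∀ w ∈ ℓ.1, ∃ k, w ∈ A k := by
    intro ℓ w hw
    obtain ⟨z, -, hℓz⟩ := ℓ.2
    exact mem_iUnion.1 (hV ▸ connectedComponentIn_subset V z (hℓz ▸ hw))
  have hex : ∀ ℓ : connectedComponentsIn V, ∃ k, A k ⊆ ℓ.1 := by
    intro ℓ
    obtain ⟨z, hz, hℓz⟩ := ℓ.2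
    have hzℓ : z ∈ ℓ.1 := hℓz ▸ mem_connectedComponentIn hz
    obtain ⟨k, hk⟩ := hmem ℓ z hzℓ
    exact ⟨k, hsub ℓ k z hk hzℓ⟩
  refine ⟨fun ℓ => Nat.find (hex ℓ), fun ℓ ℓ' hℓ => ?_, fun ℓ w hw => ?_⟩
  · replace hℓ : Nat.find (hex ℓ) = Nat.find (hex ℓ') := hℓ
    obtain ⟨w, hw⟩ := hne (Nat.find (hex ℓ))
    have hw' : w ∈ A (Nat.find (hex ℓ')) := hℓ ▸ hw
    exact Subtype.ext ((hcc ℓ w (Nat.find_spec (hex ℓ) hw)).trans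
      (hcc ℓ' w (Nat.find_spec (hex ℓ') hw')).symm)
  · obtain ⟨k, hk⟩ := hmem ℓ w hw
    have hle : Nat.find (hex ℓ) ≤ k := Nat.find_min' _ (hsub ℓ k w hk hw)
    exact mem_iUnion.2 ⟨k - Nat.find (hex ℓ), by rwa [Nat.add_sub_cancel' hle]⟩

theorem exists_closed_arcless_small_gaps (ε : ℕ → ℝ) (hε : ∀ k, 0 < ε k)
    (htotal : ∑' k, ENNReal.ofReal (2 * ε k) < ENNReal.ofReal (2 * π)) :
    ∃ E : Set ℂ, E ⊆ sphere 0 1 ∧ IsClosed E ∧ 0 < arcMeasure E ∧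
      (∀ a b : ℝ, a < b → ¬ circleMap 0 1 '' Ioo a b ⊆ E) ∧
      ∃ m : circleGaps E → ℕ, Function.Injective m ∧
        ∀ ℓ, arcMeasure ℓ.1 ≤ ∑' i, ENNReal.ofReal (2 * ε (m ℓ + i)) := by
  set c := TopologicalSpace.denseSeq ℝ
  set I : ℕ → Set ℝ := fun k => Ioo (c k - ε k) (c k + ε k)
  have hcI : ∀ k, c k ∈ I k := fun k => ⟨by linarith [hε k], by linarith [hε k]⟩
  have hO : IsOpen (⋃ k, I k) := isOpen_iUnion fun k => isOpen_Ioo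
  have hdense : Dense (⋃ k, I k) :=
    (TopologicalSpace.denseRange_denseSeq ℝ).mono
      (range_subset_iff.2 fun k => mem_iUnion.2 ⟨k, hcI k⟩)
  refine ⟨sphere 0 1 \ circleMap 0 1 '' ⋃ k, I k, sdiff_subset,
    isClosed_sphere_diff_circleMap_image hO,
    arcMeasure_sphere_diff_pos hO ((volume_iUnion_Ioo_le c ε).trans_lt htotal),
    fun a b hab => not_circleMap_image_Ioo_subset hdense hab, ?_⟩
  have hV : sphere 0 1 \ (sphere 0 1 \ circleMap 0 1 '' ⋃ k, I k) =
      ⋃ k, circleMap 0 1 '' I k := by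
    rw [sdiff_sdiff_cancel_left (circleMap_zero_one_image_subset_sphere _), image_iUnion]
  obtain ⟨m, hm_inj, hm_cover⟩ := exists_injective_index_connectedComponentsIn hV
    (fun k => isPreconnected_Ioo.image _ (continuous_circleMap 0 1).continuousOn)
    (fun k => ⟨_, mem_image_of_mem _ (hcI k)⟩)
  refine ⟨m, hm_inj, fun ℓ => ?_⟩
  calc arcMeasure ℓ.1 ≤ arcMeasure (circleMap 0 1 '' ⋃ i, I (m ℓ + i)) :=
        measure_mono ((hm_cover ℓ).trans image_iUnion.superset)
    _ ≤ volume (⋃ i, I (m ℓ + i)) := arcMeasure_image_le (isOpen_iUnion fun i => isOpen_Ioo)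
    _ ≤ _ := volume_iUnion_Ioo_le _ _

theorem exists_antitone_pos_le (u : ℕ → ℝ) (hu : ∀ k, 0 < u k) :
    ∃ v : ℕ → ℝ, Antitone v ∧ (∀ k, 0 < v k) ∧ ∀ k, v k ≤ u k := by
  refine ⟨fun k => (Finset.range (k + 1)).inf' Finset.nonempty_range_add_one u,
    fun j k hjk => ?_, fun k => ?_, fun k => ?_⟩
  · exact Finset.inf'_mono _ (Finset.range_subset_range.2 (by omega)) _
  · exact (Finset.lt_inf'_iff _).2 fun i _ => hu i
  · exact Finset.inf'_le _ (Finset.self_mem_range_succ k)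

theorem exists_antitone_forall_abs_le {h : ℝ → ℝ} (hcont : ContinuousWithinAt h (Icc 0 1) 0)
    (h0 : h 0 = 0) (r : ℕ → ℝ) (hr : ∀ k, 0 < r k) :
    ∃ η : ℕ → ℝ, Antitone η ∧ (∀ k, 0 < η k ∧ η k ≤ 1) ∧
      ∀ k, ∀ t ∈ Icc 0 (η k), |h t| ≤ r k := by
  have hδ : ∀ k, ∃ δ > 0, ∀ t ∈ Icc (0 : ℝ) 1, dist t 0 < δ → dist (h t) (h 0) < r k :=
    fun k => Metric.continuousWithinAt_iff.1 hcont (r k) (hr k)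
  choose δ hδ_pos hδ using hδ
  obtain ⟨η, hη_anti, hη_pos, hη_le⟩ := exists_antitone_pos_le (fun k => min (δ k / 2) 1)
    fun k => lt_min (half_pos (hδ_pos k)) one_pos
  refine ⟨η, hη_anti, fun k => ⟨hη_pos k, (hη_le k).trans (min_le_right _ _)⟩,
    fun k t ht => ?_⟩
  have htδ : t ≤ min (δ k / 2) 1 := ht.2.trans (hη_le k)
  have := hδ k t ⟨ht.1, htδ.trans (min_le_right _ _)⟩
    (by rw [Real.dist_0_eq_abs, abs_of_nonneg ht.1]; linarith [min_le_left (δ k / 2) 1, hδ_pos k])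
  rw [Real.dist_eq, h0, sub_zero] at this
  exact this.le

theorem tsum_ofReal_le_of_le_geometric {f : ℕ → ℝ} {a : ℝ} (ha : 0 ≤ a)
    (hf : ∀ i, f i ≤ a / 2 / 2 ^ i) : ∑' i, ENNReal.ofReal (f i) ≤ ENNReal.ofReal a := by
  calc ∑' i, ENNReal.ofReal (f i) ≤ ∑' i, ENNReal.ofReal (a / 2 / 2 ^ i) :=
        ENNReal.tsum_le_tsum fun i => ENNReal.ofReal_le_ofReal (hf i)
    _ = ENNReal.ofReal a := by
        rw [← ENNReal.ofReal_tsum_of_nonneg (fun i => by positivity) (summable_geometric_two' a),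
          tsum_geometric_two']

theorem statement17_general (h : ℝ → ℝ)
    (hcont : ContinuousOn h (Set.Icc 0 1)) (h0 : h 0 = 0) :
    ∃ E : Set ℂ, E ⊆ Metric.sphere (0 : ℂ) 1 ∧ IsClosed E ∧
      0 < arcMeasure E ∧
      (∀ a b : ℝ, a < b → ¬ (circleMap 0 1 '' Set.Ioo a b ⊆ E)) ∧
      Summable (fun ℓ : circleGaps E => h ((arcMeasure ℓ.1).toReal)) := by
  obtain ⟨η, hη_anti, hη, hη_small⟩ := exists_antitone_forall_abs_le
    (hcont 0 ⟨le_rfl, zero_le_one⟩) h0 (fun k => (1 / 2) ^ k) fun k => by positivity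
  set ε : ℕ → ℝ := fun k => η k / 4 / 2 ^ k
  have hε_tail : ∀ k i, 2 * ε (k + i) ≤ η k / 2 / 2 ^ i := fun k i => by
    rw [show 2 * ε (k + i) = η (k + i) / 2 / 2 ^ (k + i) by ring]
    have := (hη k).1
    gcongr
    · exact hη_anti (Nat.le_add_right k i)
    · exact one_le_two
    · exact Nat.le_add_left i k
  have htotal : ∑' k, ENNReal.ofReal (2 * ε k) < ENNReal.ofReal (2 * π) := by
    have := tsum_ofReal_le_of_le_geometric (hη 0).1.le (hε_tail 0)
    simp only [zero_add] at this
    exact this.trans_lt ((ENNReal.ofReal_lt_ofReal_iff (by positivity)).2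
      (by linarith [(hη 0).2, pi_gt_three]))
  obtain ⟨E, hE_sub, hE_closed, hE_pos, hE_arc, m, hm_inj, hm_gap⟩ :=
    exists_closed_arcless_small_gaps ε (fun k => by have := (hη k).1; positivity) htotal
  refine ⟨E, hE_sub, hE_closed, hE_pos, hE_arc, ?_⟩
  have hgap : ∀ ℓ, (arcMeasure ℓ.1).toReal ∈ Icc 0 (η (m ℓ)) := fun ℓ =>
    ⟨ENNReal.toReal_nonneg, ENNReal.toReal_le_of_le_ofReal (hη _).1.le
      ((hm_gap ℓ).trans (tsum_ofReal_le_of_le_geometric (hη _).1.le (hε_tail (m ℓ))))⟩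
  exact Summable.of_norm_bounded (summable_geometric_two.comp_injective hm_inj)
    fun ℓ => hη_small (m ℓ) _ (hgap ℓ)

/-- For any continuous increasing `h : [0,1] → [0,∞)` with `h 0 = 0`, there
is a closed set `E ⊆ 𝕋` of positive arclength measure containing no nonempty open arc which is
an `h`-Beurling–Carleson set: `∑_{ℓ ∈ 𝒞(E)} h(|ℓ|) < ∞`. -/
theorem statement17 (h : ℝ → ℝ)
    (hcont : ContinuousOn h (Set.Icc 0 1)) (h0 : h 0 = 0)
    (hnonneg : ∀ x ∈ Set.Icc (0 : ℝ) 1, 0 ≤ h x)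
    (hmono : MonotoneOn h (Set.Icc 0 1)) :
    ∃ E : Set ℂ, E ⊆ Metric.sphere (0 : ℂ) 1 ∧ IsClosed E ∧
      0 < arcMeasure E ∧
      (∀ a b : ℝ, a < b → ¬ (circleMap 0 1 '' Set.Ioo a b ⊆ E)) ∧
      Summable (fun ℓ : circleGaps E => h ((arcMeasure ℓ.1).toReal)) :=
  statement17_general h hcont h0
end
end

section
/- Let h : [0,1] → [0,∞) be continuous with h(0) = 0, h increasing and x ↦ h(x)/x decreasing on (0,1], and set G(x) = exp(−h(1−x)/(1−x)) for x ∈ [0,1). Then for every function f holomorphic on 𝔻 and every z ∈ 𝔻: |f(z)|² ≤ (4/π)·(1−|z|)^{−2}·exp(2·h(1−|z|)/(1−|z|))·∫_𝔻 |f(w)|² G(|w|) dA(w), where dA denotes Lebesgue area measure on 𝔻. -/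
/-!
Put `d = 1 - ‖z‖`. On the disc of radius `d / 2` about `z` we have `1 - ‖w‖ ≥ d / 2`, so, `h t / t`
being decreasing and `h` increasing, `h(1-‖w‖)/(1-‖w‖) ≤ h(d/2)/(d/2) ≤ 2 h(d)/d`: the weight is at
least `exp(-2 h(d)/d)` there. Integrating the circle mean value property of `f ^ 2` in polar
coordinates gives the area mean value property, whence `π (d/2)² ‖f z‖² ≤ ∫_{B(z, d/2)} ‖f‖²`.
-/

open MeasureTheory Set Metric Real

section MeanValue

variable {E : Type*} [NormedAddCommGroup E] [NormedSpace ℂ E]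

theorem setIntegral_Ioo_circleMap_eq_circleAverage (g : ℂ → E) (c : ℂ) (R : ℝ) :
    ∫ θ in Ioo (-π) π, g (circleMap c R θ) = (2 * π) • circleAverage g c R := by
  rw [circleAverage_eq_integral_add (-π), smul_inv_smul₀ two_pi_pos.ne',
    intervalIntegral.integral_comp_add_right (fun θ => g (circleMap c R θ)), zero_add,
    intervalIntegral.integral_of_le (by linarith [pi_pos]), integral_Ioc_eq_integral_Ioo]
  ring_nf

theorem setIntegral_ball_eq_setIntegral_polar (g : ℂ → E) (c : ℂ) (r : ℝ) :
    ∫ w in ball c r, g w = ∫ p in Ioo 0 r ×ˢ Ioo (-π) π, p.1 • g (circleMap c p.1 p.2) := by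
  have hT : Ioo 0 r ×ˢ Ioo (-π) π ⊆ polarCoord.target :=
    prod_mono Ioo_subset_Ioi_self le_rfl
  rw [← integral_indicator measurableSet_ball, ← integral_add_right_eq_self _ c,
    ← Complex.integral_comp_polarCoord_symm, ← inter_eq_self_of_subset_right hT,
    ← setIntegral_indicator (measurableSet_Ioo.prod measurableSet_Ioo)]
  refine setIntegral_congr_fun polarCoord.open_target.measurableSet fun p ⟨hs, hθ⟩ => ?_
  have hcm : Complex.polarCoord.symm p + c = circleMap c p.1 p.2 := by
    simp only [Complex.polarCoord_symm_apply, circleMap, Complex.exp_mul_I]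
    push_cast
    ring
  have hball : circleMap c p.1 p.2 ∈ ball c r ↔ p.1 < r := by
    simp [mem_ball, dist_eq_norm, circleMap_sub_center, abs_of_pos (mem_Ioi.1 hs)]
  have hmem : p ∈ Ioo 0 r ×ˢ Ioo (-π) π ↔ p.1 < r := by
    simp [mem_prod, hθ, mem_Ioi.1 hs]
  rw [hcm]
  by_cases hpr : p.1 < r
  · rw [indicator_of_mem (hball.2 hpr), indicator_of_mem (hmem.2 hpr)]
  · rw [indicator_of_notMem (hball.not.2 hpr), indicator_of_notMem (hmem.not.2 hpr), smul_zero]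

variable [CompleteSpace E]

theorem DiffContOnCl.setIntegral_ball {g : ℂ → E} {c : ℂ} {r : ℝ}
    (hg : DiffContOnCl ℂ g (ball c r)) (hr : 0 < r) :
    ∫ w in ball c r, g w = (π * r ^ 2) • g c := by
  have hK : IsCompact (Icc 0 r ×ˢ Icc (-π) π) := isCompact_Icc.prod isCompact_Icc
  have hcont : ContinuousOn (fun p : ℝ × ℝ => p.1 • g (circleMap c p.1 p.2))
      (Icc 0 r ×ˢ Icc (-π) π) := by
    refine continuousOn_fst.smul (hg.continuousOn.comp (by fun_prop) ?_)
    rintro ⟨s, θ⟩ ⟨hs, -⟩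
    rw [closure_ball c hr.ne']
    exact closedBall_subset_closedBall hs.2 (circleMap_mem_closedBall c hs.1 θ)
  have hint : IntegrableOn (fun p : ℝ × ℝ => p.1 • g (circleMap c p.1 p.2))
      (Ioo 0 r ×ˢ Ioo (-π) π) :=
    (hcont.integrableOn_compact hK).mono_set (prod_mono Ioo_subset_Icc_self Ioo_subset_Icc_self)
  have hcircle : ∀ s ∈ Ioo 0 r,
      ∫ θ in Ioo (-π) π, s • g (circleMap c s θ) = s • (2 * π) • g c := fun s hs => by
    rw [integral_smul, setIntegral_Ioo_circleMap_eq_circleAverage,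
      (hg.mono (ball_subset_ball ((abs_of_pos hs.1).le.trans hs.2.le))).circleAverage]
  rw [setIntegral_ball_eq_setIntegral_polar, Measure.volume_eq_prod, setIntegral_prod _ hint,
    setIntegral_congr_fun measurableSet_Ioo hcircle, integral_smul_const,
    ← integral_Ioc_eq_integral_Ioo, ← intervalIntegral.integral_of_le hr.le, integral_id, smul_smul]
  ring_nf

end MeanValue

theorem DiffContOnCl.mul_norm_pow_le_setIntegral_ball {f : ℂ → ℂ} {c : ℂ} {r : ℝ}
    (hf : DiffContOnCl ℂ f (ball c r)) (hr : 0 < r) (n : ℕ) :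
    π * r ^ 2 * ‖f c‖ ^ n ≤ ∫ w in ball c r, ‖f w‖ ^ n := by
  have hfn : DiffContOnCl ℂ (fun w => f w ^ n) (ball c r) :=
    ⟨hf.differentiableOn.pow n, hf.continuousOn.pow n⟩
  calc π * r ^ 2 * ‖f c‖ ^ n = ‖∫ w in ball c r, f w ^ n‖ := by
        rw [hfn.setIntegral_ball hr, norm_smul, norm_pow, Real.norm_of_nonneg (by positivity)]
    _ ≤ ∫ w in ball c r, ‖f w ^ n‖ := norm_integral_le_integral_norm _
    _ = ∫ w in ball c r, ‖f w‖ ^ n := by simp only [norm_pow]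

theorem DiffContOnCl.ofReal_mul_norm_pow_le_setLIntegral_ball {f : ℂ → ℂ} {c : ℂ} {r : ℝ}
    (hf : DiffContOnCl ℂ f (ball c r)) (hr : 0 < r) (n : ℕ) :
    ENNReal.ofReal (π * r ^ 2 * ‖f c‖ ^ n) ≤ ∫⁻ w in ball c r, ENNReal.ofReal (‖f w‖ ^ n) := by
  have hint : IntegrableOn (fun w => ‖f w‖ ^ n) (ball c r) := by
    refine (ContinuousOn.integrableOn_compact (isCompact_closedBall c r) ?_).mono_set
      ball_subset_closedBall
    rw [← closure_ball c hr.ne']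
    exact hf.continuousOn.norm.pow n
  rw [← ofReal_integral_eq_lintegral_ofReal hint (ae_of_all _ fun w => by positivity)]
  exact ENNReal.ofReal_le_ofReal (hf.mul_norm_pow_le_setIntegral_ball hr n)

theorem div_le_two_mul_div_of_half_le {h : ℝ → ℝ} (hmono : MonotoneOn h (Icc 0 1))
    (hdec : AntitoneOn (fun x => h x / x) (Ioc 0 1)) {d t : ℝ} (hd : d ∈ Ioc 0 1)
    (ht : t ∈ Icc (d / 2) 1) : h t / t ≤ 2 * h d / d := by
  obtain ⟨hd0, hd1⟩ := hd
  calc h t / t ≤ h (d / 2) / (d / 2) :=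
        hdec ⟨by linarith, by linarith⟩ ⟨by linarith [ht.1], ht.2⟩ ht.1
    _ = 2 * h (d / 2) / d := by field_simp
    _ ≤ 2 * h d / d := by
        gcongr
        exact hmono ⟨by linarith, by linarith⟩ ⟨hd0.le, hd1⟩ (by linarith)

theorem ofReal_mul_setLIntegral_le_setLIntegral_mul {α : Type*} [MeasurableSpace α]
    {μ : Measure α} {s t : Set α} (hs : MeasurableSet s) (hst : s ⊆ t) {F G : α → ℝ} {c : ℝ}
    (hF : ∀ x, 0 ≤ F x) (hc : ∀ x ∈ s, c ≤ G x) :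
    ENNReal.ofReal c * ∫⁻ x in s, ENNReal.ofReal (F x) ∂μ ≤
      ∫⁻ x in t, ENNReal.ofReal (F x * G x) ∂μ := by
  rw [← lintegral_const_mul' _ _ ENNReal.ofReal_ne_top]
  calc ∫⁻ x in s, ENNReal.ofReal c * ENNReal.ofReal (F x) ∂μ
      ≤ ∫⁻ x in s, ENNReal.ofReal (F x * G x) ∂μ := by
        refine setLIntegral_mono' hs fun x hx => ?_
        rw [← ENNReal.ofReal_mul' (hF x), mul_comm]
        exact ENNReal.ofReal_le_ofReal (mul_le_mul_of_nonneg_left (hc x hx) (hF x))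
    _ ≤ ∫⁻ x in t, ENNReal.ofReal (F x * G x) ∂μ := lintegral_mono_set hst

theorem statement18_general (h : ℝ → ℝ)
    (hmono : MonotoneOn h (Set.Icc 0 1))
    (hdec : AntitoneOn (fun x => h x / x) (Set.Ioc 0 1))
    (f : ℂ → ℂ) (hf : DifferentiableOn ℂ f (Metric.ball 0 1))
    (z : ℂ) (hz : ‖z‖ < 1) :
    ENNReal.ofReal (‖f z‖ ^ 2) ≤
      ENNReal.ofReal ((4 / Real.pi) * (1 - ‖z‖)⁻¹ ^ 2 *
          Real.exp (2 * h (1 - ‖z‖) / (1 - ‖z‖))) *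
        ∫⁻ w in Metric.ball (0 : ℂ) 1,
          ENNReal.ofReal (‖f w‖ ^ 2 * Real.exp (-(h (1 - ‖w‖) / (1 - ‖w‖)))) := by
  set d := 1 - ‖z‖ with hd_def
  set r := d / 2 with hr_def
  set C := (4 / π) * d⁻¹ ^ 2 * exp (2 * h d / d) with hC_def
  have hd : d ∈ Ioc 0 1 := ⟨by linarith, by linarith [norm_nonneg z]⟩
  have hr : 0 < r := half_pos hd.1
  have hsub : closedBall z r ⊆ ball 0 1 := fun w hw => by
    rw [mem_ball_zero_iff]; linarith [norm_le_of_mem_closedBall hw, hd.1]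
  have hweight : ∀ w ∈ ball z r, exp (-(2 * h d / d)) ≤ exp (-(h (1 - ‖w‖) / (1 - ‖w‖))) :=
    fun w hw => exp_le_exp.2 <| neg_le_neg <| div_le_two_mul_div_of_half_le hmono hdec hd
      ⟨by linarith [norm_lt_of_mem_ball hw], by linarith [norm_nonneg w]⟩
  calc ENNReal.ofReal (‖f z‖ ^ 2)
      = ENNReal.ofReal C * (ENNReal.ofReal (exp (-(2 * h d / d))) *
          ENNReal.ofReal (π * r ^ 2 * ‖f z‖ ^ 2)) := by
        rw [← ENNReal.ofReal_mul (by positivity), ← ENNReal.ofReal_mul (by positivity)]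
        congr 1
        have : d ≠ 0 := hd.1.ne'
        rw [hC_def, hr_def, exp_neg]
        field_simp
        ring
    _ ≤ ENNReal.ofReal C * (ENNReal.ofReal (exp (-(2 * h d / d))) *
          ∫⁻ w in ball z r, ENNReal.ofReal (‖f w‖ ^ 2)) := by
        gcongr
        exact (hf.mono (closure_ball z hr.ne' ▸ hsub)).diffContOnCl
          |>.ofReal_mul_norm_pow_le_setLIntegral_ball hr 2
    _ ≤ _ := by
        gcongr
        exact ofReal_mul_setLIntegral_le_setLIntegral_mul measurableSet_ball
          (ball_subset_closedBall.trans hsub) (fun w => by positivity) hweight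

/-- Let `h : [0,1] → [0,∞)` be continuous with `h 0 = 0`, increasing, with
`x ↦ h x / x` decreasing on `(0,1]`, and let `G x = exp(-h(1-x)/(1-x))`. Then every function
`f` holomorphic on the unit disk satisfies, at every `z` in the disk, the pointwise bound
`|f z|² ≤ (4/π)·(1-|z|)⁻²·exp(2·h(1-|z|)/(1-|z|))·∫_𝔻 |f w|² G(|w|) dA(w)`
(as an inequality in `[0,∞]`, so that it also holds when the weighted integral is infinite). -/
theorem statement18 (h : ℝ → ℝ)
    (hcont : ContinuousOn h (Set.Icc 0 1)) (h0 : h 0 = 0)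
    (hnonneg : ∀ x ∈ Set.Icc (0 : ℝ) 1, 0 ≤ h x)
    (hmono : MonotoneOn h (Set.Icc 0 1))
    (hdec : AntitoneOn (fun x => h x / x) (Set.Ioc 0 1))
    (f : ℂ → ℂ) (hf : DifferentiableOn ℂ f (Metric.ball 0 1))
    (z : ℂ) (hz : ‖z‖ < 1) :
    ENNReal.ofReal (‖f z‖ ^ 2) ≤
      ENNReal.ofReal ((4 / Real.pi) * (1 - ‖z‖)⁻¹ ^ 2 *
          Real.exp (2 * h (1 - ‖z‖) / (1 - ‖z‖))) *
        ∫⁻ w in Metric.ball (0 : ℂ) 1,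
          ENNReal.ofReal (‖f w‖ ^ 2 * Real.exp (-(h (1 - ‖w‖) / (1 - ‖w‖)))) :=
  statement18_general h hmono hdec f hf z hz
end
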